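/- arXiv:2303.09868 — 2 statements merged into one kernel-verified Lean document; each statement's English description precedes it below -/
import Mathlib

section
/- For essentially bounded random variables X, Y, the operator δ(X) := M(X|𝓗) − m(X|𝓗) satisfies: (1) δ(λX) = |λ|·δ(X) P-a.s. for all real λ; (2) δ(X) − δ(Y) ≤ δ(X−Y) ≤ δ(X) + δ(Y) P-a.s.; (3) δ(X) = δ(X⁺) + δ(X⁻) P-a.s., where X⁺ = max(X,0) and X⁻ = max(−X,0). Moreover δ(X) ≥ 0 P-a.s., and δ(X) = 0 P-a.s. if and only if X agrees P-a.s. with an 𝓗-measurable random variable. -/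
open MeasureTheory Filter

/-- A real random variable is essentially bounded w.r.t. the measure `P`. -/
def EssBdd {Ω : Type*} {F : MeasurableSpace Ω} (P : @Measure Ω F) (X : Ω → ℝ) : Prop :=
  ∃ C : ℝ, ∀ᵐ ω ∂P, |X ω| ≤ C

/-- `Y` is the conditional essential supremum `M(X|H)` of `X` given the sub-σ-algebra `H`:
`Y` is `H`-measurable, essentially bounded, `X ≤ Y` a.s., and `Y` is a.s. below every
`H`-measurable `Z` with `X ≤ Z` a.s. -/
def IsCondEssSup {Ω : Type*} {F : MeasurableSpace Ω} (P : @Measure Ω F)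
    (H : MeasurableSpace Ω) (X Y : Ω → ℝ) : Prop :=
  Measurable[H] Y ∧ EssBdd P Y ∧ (∀ᵐ ω ∂P, X ω ≤ Y ω) ∧
    ∀ Z : Ω → ℝ, Measurable[H] Z → (∀ᵐ ω ∂P, X ω ≤ Z ω) → ∀ᵐ ω ∂P, Y ω ≤ Z ω

/-- `Y` is the conditional essential infimum `m(X|H) = -M(-X|H)`. -/
def IsCondEssInf {Ω : Type*} {F : MeasurableSpace Ω} (P : @Measure Ω F)
    (H : MeasurableSpace Ω) (X Y : Ω → ℝ) : Prop :=
  IsCondEssSup P H (fun ω => -X ω) (fun ω => -Y ω)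

/-!
The minimality property of `M(·|H)` makes it monotone, a.s. unique and subadditive, and
lets `H`-measurable bounded variables behave like constants, so that
`M(l X) = l M(X)` for `l ≥ 0` and `M(max X W) = max (M X) W`, `M(min X W) = min (M X) W`.
Via `m(X) = -M(-X)`, each property of the conditional range `δ = M - m` (`condRange` in lemma
names) becomes pointwise arithmetic between these identities.
-/

section

variable {Ω : Type*} {F : MeasurableSpace Ω} {P : @Measure Ω F} {H : MeasurableSpace Ω}
  {X X' Z W M M' m m' : Ω → ℝ}

namespace EssBdd

lemma neg (hX : EssBdd P X) : EssBdd P fun ω => -X ω := by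
  obtain ⟨C, hC⟩ := hX
  exact ⟨C, by filter_upwards [hC] with ω hω; rwa [abs_neg]⟩

lemma const_mul (hX : EssBdd P X) (l : ℝ) : EssBdd P fun ω => l * X ω := by
  obtain ⟨C, hC⟩ := hX
  refine ⟨|l| * C, ?_⟩
  filter_upwards [hC] with ω hω
  rw [abs_mul]
  exact mul_le_mul_of_nonneg_left hω (abs_nonneg l)

lemma max (hX : EssBdd P X) (hW : EssBdd P W) : EssBdd P fun ω => max (X ω) (W ω) := by
  obtain ⟨C, hC⟩ := hX
  obtain ⟨D, hD⟩ := hW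
  refine ⟨Max.max C D, ?_⟩
  filter_upwards [hC, hD] with ω h₁ h₂
  exact abs_max_le_max_abs_abs.trans (max_le_max h₁ h₂)

lemma min (hX : EssBdd P X) (hW : EssBdd P W) : EssBdd P fun ω => min (X ω) (W ω) := by
  obtain ⟨C, hC⟩ := hX
  obtain ⟨D, hD⟩ := hW
  refine ⟨Max.max C D, ?_⟩
  filter_upwards [hC, hD] with ω h₁ h₂
  exact abs_min_le_max_abs_abs.trans (max_le_max h₁ h₂)

end EssBdd

namespace IsCondEssSup

lemma measurable (h : IsCondEssSup P H X M) : Measurable[H] M := h.1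

lemma essBdd (h : IsCondEssSup P H X M) : EssBdd P M := h.2.1

lemma ae_le (h : IsCondEssSup P H X M) : ∀ᵐ ω ∂P, X ω ≤ M ω := h.2.2.1

lemma ae_le_of_ae_le (h : IsCondEssSup P H X M) (hZ : Measurable[H] Z)
    (hXZ : ∀ᵐ ω ∂P, X ω ≤ Z ω) : ∀ᵐ ω ∂P, M ω ≤ Z ω :=
  h.2.2.2 Z hZ hXZ

lemma mono (h : IsCondEssSup P H X M) (h' : IsCondEssSup P H X' M')
    (hX : ∀ᵐ ω ∂P, X ω ≤ X' ω) : ∀ᵐ ω ∂P, M ω ≤ M' ω :=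
  h.ae_le_of_ae_le h'.measurable (by filter_upwards [hX, h'.ae_le] with ω using le_trans)

lemma unique (h : IsCondEssSup P H X M) (h' : IsCondEssSup P H X' M') (hX : X =ᵐ[P] X') :
    M =ᵐ[P] M' := by
  filter_upwards [h.mono h' hX.le, h'.mono h hX.symm.le] with ω using le_antisymm

lemma ae_eq_of_measurable (h : IsCondEssSup P H X M) (hZ : Measurable[H] Z) (hXZ : X =ᵐ[P] Z) :
    M =ᵐ[P] Z := by
  filter_upwards [h.ae_le_of_ae_le hZ hXZ.le, h.ae_le, hXZ] with ω h₁ h₂ h₃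
  exact le_antisymm h₁ (h₃ ▸ h₂)

lemma ae_le_add {X₁ X₂ M₁ M₂ : Ω → ℝ} (h : IsCondEssSup P H X M)
    (h₁ : IsCondEssSup P H X₁ M₁) (h₂ : IsCondEssSup P H X₂ M₂)
    (hX : ∀ᵐ ω ∂P, X ω ≤ X₁ ω + X₂ ω) : ∀ᵐ ω ∂P, M ω ≤ M₁ ω + M₂ ω :=
  h.ae_le_of_ae_le (h₁.measurable.add h₂.measurable) <| by
    filter_upwards [hX, h₁.ae_le, h₂.ae_le] with ω _ _ _
    linarith

lemma const_mul (h : IsCondEssSup P H X M) {l : ℝ} (hl : 0 ≤ l) :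
    IsCondEssSup P H (fun ω => l * X ω) (fun ω => l * M ω) := by
  refine ⟨measurable_const.mul h.measurable, h.essBdd.const_mul l, ?_, fun Z hZ hXZ => ?_⟩
  · filter_upwards [h.ae_le] with ω hω using mul_le_mul_of_nonneg_left hω hl
  rcases hl.eq_or_lt with rfl | hl
  · simpa using hXZ
  have hMZ : ∀ᵐ ω ∂P, M ω ≤ l⁻¹ * Z ω :=
    h.ae_le_of_ae_le (measurable_const.mul hZ) <| by
      filter_upwards [hXZ] with ω hω using (le_inv_mul_iff₀ hl).2 hω
  filter_upwards [hMZ] with ω hω using (le_inv_mul_iff₀ hl).1 hω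

lemma max (h : IsCondEssSup P H X M) (hW : Measurable[H] W) (hWb : EssBdd P W) :
    IsCondEssSup P H (fun ω => max (X ω) (W ω)) (fun ω => max (M ω) (W ω)) := by
  refine ⟨h.measurable.max hW, h.essBdd.max hWb, ?_, fun Z hZ hXZ => ?_⟩
  · filter_upwards [h.ae_le] with ω hω using max_le_max_right _ hω
  have hMZ := h.ae_le_of_ae_le hZ <| by
    filter_upwards [hXZ] with ω hω using (le_max_left _ _).trans hω
  filter_upwards [hMZ, hXZ] with ω h₁ h₂ using max_le h₁ ((le_max_right _ _).trans h₂)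

lemma min (h : IsCondEssSup P H X M) (hW : Measurable[H] W) (hWb : EssBdd P W) :
    IsCondEssSup P H (fun ω => min (X ω) (W ω)) (fun ω => min (M ω) (W ω)) := by
  refine ⟨h.measurable.min hW, h.essBdd.min hWb, ?_, fun Z hZ hXZ => ?_⟩
  · filter_upwards [h.ae_le] with ω hω using min_le_min_right _ hω
  -- Where `W ≤ Z` the constraint `min X W ≤ Z` says nothing about `X`, so `M` serves as bound there.
  let Z' : Ω → ℝ := fun ω => if Z ω < W ω then Z ω else M ω
  have hMZ' : ∀ᵐ ω ∂P, M ω ≤ Z' ω := by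
    refine h.ae_le_of_ae_le (Measurable.ite (measurableSet_lt hZ hW) hZ h.measurable) ?_
    filter_upwards [hXZ, h.ae_le] with ω h₁ h₂
    by_cases hlt : Z ω < W ω
    · simpa [Z', hlt] using (min_le_iff.1 h₁).resolve_right (not_le.2 hlt)
    · simpa [Z', hlt] using h₂
  filter_upwards [hMZ'] with ω hω
  by_cases hlt : Z ω < W ω
  · simpa [Z', hlt] using (min_le_left _ _).trans hω
  · exact (min_le_right _ _).trans (not_lt.1 hlt)

lemma isCondEssInf_neg (h : IsCondEssSup P H X M) :
    IsCondEssInf P H (fun ω => -X ω) (fun ω => -M ω) := by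
  simpa only [IsCondEssInf, neg_neg] using h

lemma isCondEssInf_const_mul_of_nonpos (h : IsCondEssSup P H X M) {l : ℝ} (hl : l ≤ 0) :
    IsCondEssInf P H (fun ω => l * X ω) (fun ω => l * M ω) := by
  simpa only [IsCondEssInf, neg_mul] using h.const_mul (neg_nonneg.2 hl)

end IsCondEssSup

namespace IsCondEssInf

lemma isCondEssSup_neg (h : IsCondEssInf P H X m) :
    IsCondEssSup P H (fun ω => -X ω) (fun ω => -m ω) := h

lemma ae_le (h : IsCondEssInf P H X m) : ∀ᵐ ω ∂P, m ω ≤ X ω := by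
  filter_upwards [h.isCondEssSup_neg.ae_le] with ω hω using neg_le_neg_iff.1 hω

lemma unique (h : IsCondEssInf P H X m) (h' : IsCondEssInf P H X' m') (hX : X =ᵐ[P] X') :
    m =ᵐ[P] m' := by
  filter_upwards [h.isCondEssSup_neg.unique h'.isCondEssSup_neg (hX.fun_comp Neg.neg)]
    with ω hω using neg_inj.1 hω

lemma ae_eq_of_measurable (h : IsCondEssInf P H X m) (hZ : Measurable[H] Z) (hXZ : X =ᵐ[P] Z) :
    m =ᵐ[P] Z := by
  filter_upwards [h.isCondEssSup_neg.ae_eq_of_measurable hZ.neg (hXZ.fun_comp Neg.neg)]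
    with ω hω using neg_inj.1 hω

lemma const_mul (h : IsCondEssInf P H X m) {l : ℝ} (hl : 0 ≤ l) :
    IsCondEssInf P H (fun ω => l * X ω) (fun ω => l * m ω) := by
  simpa only [IsCondEssInf, mul_neg] using h.isCondEssSup_neg.const_mul hl

lemma isCondEssSup_const_mul_of_nonpos (h : IsCondEssInf P H X m) {l : ℝ} (hl : l ≤ 0) :
    IsCondEssSup P H (fun ω => l * X ω) (fun ω => l * m ω) := by
  simpa only [neg_mul_neg] using h.isCondEssSup_neg.const_mul (neg_nonneg.2 hl)

lemma max (h : IsCondEssInf P H X m) (hW : Measurable[H] W) (hWb : EssBdd P W) :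
    IsCondEssInf P H (fun ω => max (X ω) (W ω)) (fun ω => max (m ω) (W ω)) := by
  simpa only [IsCondEssInf, Pi.neg_apply, min_neg_neg] using h.isCondEssSup_neg.min hW.neg hWb.neg

end IsCondEssInf

lemma condRange_nonneg (hM : IsCondEssSup P H X M) (hm : IsCondEssInf P H X m) :
    ∀ᵐ ω ∂P, 0 ≤ M ω - m ω := by
  filter_upwards [hM.ae_le, hm.ae_le] with ω h₁ h₂
  linarith

lemma condRange_const_mul {Ml ml : Ω → ℝ} {l : ℝ} (hM : IsCondEssSup P H X M)
    (hm : IsCondEssInf P H X m) (hMl : IsCondEssSup P H (fun ω => l * X ω) Ml)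
    (hml : IsCondEssInf P H (fun ω => l * X ω) ml) :
    (fun ω => Ml ω - ml ω) =ᵐ[P] fun ω => |l| * (M ω - m ω) := by
  rcases le_total 0 l with hl | hl
  · filter_upwards [hMl.unique (hM.const_mul hl) .rfl, hml.unique (hm.const_mul hl) .rfl]
      with ω h₁ h₂
    rw [h₁, h₂, abs_of_nonneg hl]
    ring
  · filter_upwards [hMl.unique (hm.isCondEssSup_const_mul_of_nonpos hl) .rfl,
      hml.unique (hM.isCondEssInf_const_mul_of_nonpos hl) .rfl] with ω h₁ h₂
    rw [h₁, h₂, abs_of_nonpos hl]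
    ring

lemma condRange_sub_le {Y MY mY MXY mXY : Ω → ℝ} (hM : IsCondEssSup P H X M)
    (hm : IsCondEssInf P H X m) (hMY : IsCondEssSup P H Y MY) (hmY : IsCondEssInf P H Y mY)
    (hMXY : IsCondEssSup P H (fun ω => X ω - Y ω) MXY)
    (hmXY : IsCondEssInf P H (fun ω => X ω - Y ω) mXY) :
    ∀ᵐ ω ∂P, MXY ω - mXY ω ≤ (M ω - m ω) + (MY ω - mY ω) := by
  filter_upwards [hMXY.ae_le_add hM hmY.isCondEssSup_neg (by simp [sub_eq_add_neg]),
    hmXY.isCondEssSup_neg.ae_le_add hMY hm.isCondEssSup_neg (by simp [add_comm])]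
    with ω _ _
  linarith

lemma condRange_sub_condRange_le {Y MY mY MXY mXY : Ω → ℝ} (hM : IsCondEssSup P H X M)
    (hm : IsCondEssInf P H X m) (hMY : IsCondEssSup P H Y MY) (hmY : IsCondEssInf P H Y mY)
    (hMXY : IsCondEssSup P H (fun ω => X ω - Y ω) MXY)
    (hmXY : IsCondEssInf P H (fun ω => X ω - Y ω) mXY) :
    ∀ᵐ ω ∂P, (M ω - m ω) - (MY ω - mY ω) ≤ MXY ω - mXY ω := by
  filter_upwards [hM.ae_le_add hMXY hMY (by simp),
    hm.isCondEssSup_neg.ae_le_add hmXY.isCondEssSup_neg hmY.isCondEssSup_neg (by simp)]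
    with ω _ _
  linarith

lemma condRange_eq_posPart_add_negPart {Mp mp Mn mn : Ω → ℝ} (hM : IsCondEssSup P H X M)
    (hm : IsCondEssInf P H X m) (hMp : IsCondEssSup P H (fun ω => max (X ω) 0) Mp)
    (hmp : IsCondEssInf P H (fun ω => max (X ω) 0) mp)
    (hMn : IsCondEssSup P H (fun ω => max (-X ω) 0) Mn)
    (hmn : IsCondEssInf P H (fun ω => max (-X ω) 0) mn) :
    (fun ω => M ω - m ω) =ᵐ[P] fun ω => (Mp ω - mp ω) + (Mn ω - mn ω) := by
  have h0 : Measurable[H] fun _ : Ω => (0 : ℝ) := measurable_const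
  have h0b : EssBdd P fun _ : Ω => (0 : ℝ) := ⟨0, by simp⟩
  filter_upwards [hMp.unique (hM.max h0 h0b) .rfl, hmp.unique (hm.max h0 h0b) .rfl,
    hMn.unique (hm.isCondEssSup_neg.max h0 h0b) .rfl,
    hmn.unique (hM.isCondEssInf_neg.max h0 h0b) .rfl] with ω h₁ h₂ h₃ h₄
  rw [h₁, h₂, h₃, h₄]
  linarith [max_zero_sub_max_neg_zero_eq_self (M ω), max_zero_sub_max_neg_zero_eq_self (m ω)]

lemma condRange_ae_eq_zero_iff (hM : IsCondEssSup P H X M) (hm : IsCondEssInf P H X m) :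
    ((fun ω => M ω - m ω) =ᵐ[P] fun _ => (0 : ℝ)) ↔
      ∃ Z : Ω → ℝ, Measurable[H] Z ∧ X =ᵐ[P] Z := by
  constructor
  · intro h
    refine ⟨M, hM.measurable, ?_⟩
    filter_upwards [h, hM.ae_le, hm.ae_le] with ω _ _ _
    linarith
  · rintro ⟨Z, hZ, hXZ⟩
    filter_upwards [hM.ae_eq_of_measurable hZ hXZ, hm.ae_eq_of_measurable hZ hXZ] with ω h₁ h₂
    rw [h₁, h₂, sub_self]

end

theorem delta_semi_norm_general {Ω : Type*} [F : MeasurableSpace Ω]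
    (P : Measure Ω) (H : MeasurableSpace Ω)
    (X Y MX mX MY mY MXY mXY Mp mp Mn mn : Ω → ℝ)
    (hMX : IsCondEssSup P H X MX) (hmX : IsCondEssInf P H X mX)
    (hMY : IsCondEssSup P H Y MY) (hmY : IsCondEssInf P H Y mY)
    (ML mL : ℝ → Ω → ℝ)
    (hML : ∀ l : ℝ, IsCondEssSup P H (fun ω => l * X ω) (ML l))
    (hmL : ∀ l : ℝ, IsCondEssInf P H (fun ω => l * X ω) (mL l))
    (hMXY : IsCondEssSup P H (fun ω => X ω - Y ω) MXY)
    (hmXY : IsCondEssInf P H (fun ω => X ω - Y ω) mXY)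
    (hMp : IsCondEssSup P H (fun ω => max (X ω) 0) Mp)
    (hmp : IsCondEssInf P H (fun ω => max (X ω) 0) mp)
    (hMn : IsCondEssSup P H (fun ω => max (-X ω) 0) Mn)
    (hmn : IsCondEssInf P H (fun ω => max (-X ω) 0) mn) :
    (∀ l : ℝ, (fun ω => ML l ω - mL l ω) =ᵐ[P] fun ω => |l| * (MX ω - mX ω)) ∧
      (∀ᵐ ω ∂P, (MX ω - mX ω) - (MY ω - mY ω) ≤ MXY ω - mXY ω ∧
        MXY ω - mXY ω ≤ (MX ω - mX ω) + (MY ω - mY ω)) ∧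
      ((fun ω => MX ω - mX ω) =ᵐ[P] fun ω => (Mp ω - mp ω) + (Mn ω - mn ω)) ∧
      (∀ᵐ ω ∂P, 0 ≤ MX ω - mX ω) ∧
      (((fun ω => MX ω - mX ω) =ᵐ[P] fun _ => (0 : ℝ)) ↔
        ∃ Z : Ω → ℝ, Measurable[H] Z ∧ X =ᵐ[P] Z) :=
  ⟨fun _ => condRange_const_mul hMX hmX (hML _) (hmL _),
    (condRange_sub_condRange_le hMX hmX hMY hmY hMXY hmXY).and
      (condRange_sub_le hMX hmX hMY hmY hMXY hmXY),
    condRange_eq_posPart_add_negPart hMX hmX hMp hmp hMn hmn,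
    condRange_nonneg hMX hmX,
    condRange_ae_eq_zero_iff hMX hmX⟩

/-- Properties of the operator `δ(X) := M(X|H) − m(X|H)`: absolute homogeneity, the
semi-norm inequalities, additivity over positive and negative parts, nonnegativity, and the
fact that `δ(X) = 0` a.s. iff `X` agrees a.s. with an `H`-measurable random variable. -/
theorem delta_semi_norm {Ω : Type*} [F : MeasurableSpace Ω]
    (P : Measure Ω) [IsProbabilityMeasure P] (H : MeasurableSpace Ω) (hH : H ≤ F)
    (X Y MX mX MY mY MXY mXY Mp mp Mn mn : Ω → ℝ)
    (hX : EssBdd P X) (hY : EssBdd P Y)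
    (hMX : IsCondEssSup P H X MX) (hmX : IsCondEssInf P H X mX)
    (hMY : IsCondEssSup P H Y MY) (hmY : IsCondEssInf P H Y mY)
    (ML mL : ℝ → Ω → ℝ)
    (hML : ∀ l : ℝ, IsCondEssSup P H (fun ω => l * X ω) (ML l))
    (hmL : ∀ l : ℝ, IsCondEssInf P H (fun ω => l * X ω) (mL l))
    (hMXY : IsCondEssSup P H (fun ω => X ω - Y ω) MXY)
    (hmXY : IsCondEssInf P H (fun ω => X ω - Y ω) mXY)
    (hMp : IsCondEssSup P H (fun ω => max (X ω) 0) Mp)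
    (hmp : IsCondEssInf P H (fun ω => max (X ω) 0) mp)
    (hMn : IsCondEssSup P H (fun ω => max (-X ω) 0) Mn)
    (hmn : IsCondEssInf P H (fun ω => max (-X ω) 0) mn) :
    (∀ l : ℝ, (fun ω => ML l ω - mL l ω) =ᵐ[P] fun ω => |l| * (MX ω - mX ω)) ∧
      (∀ᵐ ω ∂P, (MX ω - mX ω) - (MY ω - mY ω) ≤ MXY ω - mXY ω ∧
        MXY ω - mXY ω ≤ (MX ω - mX ω) + (MY ω - mY ω)) ∧
      ((fun ω => MX ω - mX ω) =ᵐ[P] fun ω => (Mp ω - mp ω) + (Mn ω - mn ω)) ∧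
      (∀ᵐ ω ∂P, 0 ≤ MX ω - mX ω) ∧
      (((fun ω => MX ω - mX ω) =ᵐ[P] fun _ => (0 : ℝ)) ↔
        ∃ Z : Ω → ℝ, Measurable[H] Z ∧ X =ᵐ[P] Z) :=
  delta_semi_norm_general (F := F) P H X Y MX mX MY mY MXY mXY Mp mp Mn mn hMX hmX hMY hmY ML mL hML
    hmL hMXY hmXY hMp hmp hMn hmn
end

section
/- Let X be an essentially bounded random variable and set δ(X) := M(X|𝓗) − m(X|𝓗) and g₀ := (M(X|𝓗) + m(X|𝓗))/2. Then (1) M(|X − g₀| |𝓗) = δ(X)/2 P-a.s., and (2) for every 𝓗-measurable essentially bounded random variable g, δ(X)/2 ≤ M(|X − g| |𝓗) P-a.s. In other words, the 𝓗-conditional L^∞-distance from X to the 𝓗-measurable random variables equals δ(X)/2 and is attained at g₀. -/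
open MeasureTheory Filter

/-
If `|X - g| ≤ d` a.s. with `g`, `d` both `H`-measurable, then `g - d ≤ X ≤ g + d` gives
`M(X|H) ≤ g + d` and `g - d ≤ m(X|H)`, so `δ(X) ≤ 2d`. Conversely `m(X|H) ≤ X ≤ M(X|H)` says
exactly that `|X - g₀| ≤ δ(X)/2`, so `δ(X)/2` is an `H`-measurable bound for `|X - g₀|` and
dominates `M(|X - g₀| |H)`.
-/

section CondEss

variable {Ω : Type*} {F H : MeasurableSpace Ω} {P : @Measure Ω F}
  {X Y : Ω → ℝ}

theorem IsCondEssSup.measurable_s17 (hY : IsCondEssSup P H X Y) : Measurable[H] Y :=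
  hY.1

theorem IsCondEssSup.ae_le_s17 (hY : IsCondEssSup P H X Y) : ∀ᵐ ω ∂P, X ω ≤ Y ω :=
  hY.2.2.1

theorem IsCondEssSup.ae_le_of_ae_le_s17 (hY : IsCondEssSup P H X Y) {Z : Ω → ℝ}
    (hZ : Measurable[H] Z) (hXZ : ∀ᵐ ω ∂P, X ω ≤ Z ω) : ∀ᵐ ω ∂P, Y ω ≤ Z ω :=
  hY.2.2.2 Z hZ hXZ

theorem IsCondEssInf.measurable_s17 (hY : IsCondEssInf P H X Y) : Measurable[H] Y := by
  simpa only [neg_neg] using hY.1.fun_neg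

theorem IsCondEssInf.ae_le_s17 (hY : IsCondEssInf P H X Y) : ∀ᵐ ω ∂P, Y ω ≤ X ω := by
  filter_upwards [hY.2.2.1] with ω h
  exact neg_le_neg_iff.mp h

theorem IsCondEssInf.ae_le_of_ae_le_s17 (hY : IsCondEssInf P H X Y) {Z : Ω → ℝ}
    (hZ : Measurable[H] Z) (hZX : ∀ᵐ ω ∂P, Z ω ≤ X ω) : ∀ᵐ ω ∂P, Z ω ≤ Y ω := by
  have h := IsCondEssSup.ae_le_of_ae_le_s17 hY hZ.fun_neg <| by
    filter_upwards [hZX] with ω h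
    exact neg_le_neg h
  filter_upwards [h] with ω h
  exact neg_le_neg_iff.mp h

theorem IsCondEssSup.half_sub_le_of_abs_sub_le {MX mX g d : Ω → ℝ}
    (hMX : IsCondEssSup P H X MX) (hmX : IsCondEssInf P H X mX)
    (hg : Measurable[H] g) (hd : Measurable[H] d) (hXg : ∀ᵐ ω ∂P, |X ω - g ω| ≤ d ω) :
    ∀ᵐ ω ∂P, (MX ω - mX ω) / 2 ≤ d ω := by
  have hM : ∀ᵐ ω ∂P, MX ω ≤ g ω + d ω :=
    hMX.ae_le_of_ae_le_s17 (hg.add hd) <| by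
      filter_upwards [hXg] with ω h
      linarith [(abs_le.mp h).2]
  have hm : ∀ᵐ ω ∂P, g ω - d ω ≤ mX ω :=
    hmX.ae_le_of_ae_le_s17 (hg.sub hd) <| by
      filter_upwards [hXg] with ω h
      linarith [(abs_le.mp h).1]
  filter_upwards [hM, hm] with ω hM hm
  linarith

theorem IsCondEssSup.abs_sub_midpoint_le_half_sub {MX mX : Ω → ℝ}
    (hMX : IsCondEssSup P H X MX) (hmX : IsCondEssInf P H X mX) :
    ∀ᵐ ω ∂P, |X ω - (MX ω + mX ω) / 2| ≤ (MX ω - mX ω) / 2 := by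
  filter_upwards [hMX.ae_le_s17, hmX.ae_le_s17] with ω hM hm
  rw [abs_le]
  constructor <;> linarith

end CondEss

theorem dist_to_measurable_eq_half_delta_general {Ω : Type*} [F : MeasurableSpace Ω]
    (P : Measure Ω) (H : MeasurableSpace Ω)
    (X MX mX D : Ω → ℝ)
    (hMX : IsCondEssSup P H X MX) (hmX : IsCondEssInf P H X mX)
    (hD : IsCondEssSup P H (fun ω => |X ω - (MX ω + mX ω) / 2|) D) :
    (D =ᵐ[P] fun ω => (MX ω - mX ω) / 2) ∧
      ∀ g Dg : Ω → ℝ, Measurable[H] g → EssBdd P g →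
        IsCondEssSup P H (fun ω => |X ω - g ω|) Dg →
        ∀ᵐ ω ∂P, (MX ω - mX ω) / 2 ≤ Dg ω := by
  have lower_bound : ∀ g Dg : Ω → ℝ, Measurable[H] g →
      IsCondEssSup P H (fun ω => |X ω - g ω|) Dg → ∀ᵐ ω ∂P, (MX ω - mX ω) / 2 ≤ Dg ω :=
    fun g Dg hg hDg => hMX.half_sub_le_of_abs_sub_le hmX hg hDg.measurable_s17 hDg.ae_le_s17
  have hM := hMX.measurable_s17
  have hm := hmX.measurable_s17
  have hle : ∀ᵐ ω ∂P, D ω ≤ (MX ω - mX ω) / 2 :=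
    hD.ae_le_of_ae_le_s17 ((hM.sub hm).div_const 2) (hMX.abs_sub_midpoint_le_half_sub hmX)
  have hge := lower_bound _ D ((hM.add hm).div_const 2) hD
  refine ⟨?_, fun g Dg hg _ hDg => lower_bound g Dg hg hDg⟩
  filter_upwards [hle, hge] with ω hle hge
  exact le_antisymm hle hge

/-- The conditional `L^∞` distance from `X` to the `H`-measurable random variables equals
`δ(X)/2 = (M(X|H) − m(X|H))/2` and is attained at `g₀ = (M(X|H) + m(X|H))/2`. -/
theorem dist_to_measurable_eq_half_delta {Ω : Type*} [F : MeasurableSpace Ω]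
    (P : Measure Ω) [IsProbabilityMeasure P] (H : MeasurableSpace Ω) (hH : H ≤ F)
    (X MX mX D : Ω → ℝ) (hX : EssBdd P X)
    (hMX : IsCondEssSup P H X MX) (hmX : IsCondEssInf P H X mX)
    (hD : IsCondEssSup P H (fun ω => |X ω - (MX ω + mX ω) / 2|) D) :
    (D =ᵐ[P] fun ω => (MX ω - mX ω) / 2) ∧
      ∀ g Dg : Ω → ℝ, Measurable[H] g → EssBdd P g →
        IsCondEssSup P H (fun ω => |X ω - g ω|) Dg →
        ∀ᵐ ω ∂P, (MX ω - mX ω) / 2 ≤ Dg ω :=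
  dist_to_measurable_eq_half_delta_general (F := F) P H X MX mX D hMX hmX hD
end
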